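/- arXiv:2309.13791 — 5 statements merged into one kernel-verified Lean document; each statement's English description precedes it below -/
import Mathlib

section
/- Every element f of the field of fractions Q(Λ_{ℤ,univ}) of the universal Novikov ring over ℤ, viewed as an element of Λ_{ℚ,univ} = HahnSeries ℝ ℚ via the canonical embedding, can be written as a series ∑ c_j T^{μ_j} with c_j ∈ ℚ in which only finitely many primes appear in the denominators of the coefficients; precisely, there exists a nonzero integer b such that every coefficient of f lies in the subring ℤ[1/b] of ℚ. -/
/-!
Write `f = A / B` and let `b` be the leading coefficient of `B`. In the subring `ℤ[1/b]` of `ℚ`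
the leading coefficient of `B` is a unit, and a Hahn series over a group of exponents with unit
leading coefficient is invertible. So `B` is already invertible over `ℤ[1/b]`, and
`f = A * B⁻¹` has all its coefficients in `ℤ[1/b]`.
-/

noncomputable section

/-- The canonical coefficientwise embedding `Λ_{ℤ,univ} → Λ_{ℚ,univ}`. -/
def iota (x : HahnSeries ℝ ℤ) : HahnSeries ℝ ℚ := x.map (Int.castRingHom ℚ)

namespace HahnSeries

variable {Γ : Type*} [LinearOrder Γ]

theorem leadingCoeff_map_of_injective [Zero Γ] {R S F : Type*} [Zero R] [Zero S]
    [FunLike F R S] [ZeroHomClass F R S] {φ : F} (hφ : Function.Injective φ)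
    (x : HahnSeries Γ R) :
    (x.map φ).leadingCoeff = φ x.leadingCoeff := by
  have hcoeff : ∀ g, (x.map φ).coeff g ≠ 0 ↔ x.coeff g ≠ 0 := fun g => by
    simp [map_eq_zero_iff φ hφ]
  obtain rfl | hx := eq_or_ne x 0
  · rw [leadingCoeff_zero, map_zero, leadingCoeff_eq_zero]
    ext g
    simp
  have hxφ : (x.map φ).coeff x.order ≠ 0 := (hcoeff _).2 (coeff_order_eq_zero.not.mpr hx)
  have horder : (x.map φ).order = x.order :=
    le_antisymm (order_le_of_coeff_ne_zero hxφ) (order_le_of_coeff_ne_zero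
      ((hcoeff _).1 (coeff_order_eq_zero.not.mpr (ne_zero_of_coeff_ne_zero hxφ))))
  rw [leadingCoeff_eq, leadingCoeff_eq, horder, map_coeff]

theorem coeff_mem_of_mul_map_subtype_eq [AddCommGroup Γ] [IsOrderedAddMonoid Γ] {R : Type*}
    [CommRing R] {S : Subring R} {A B : HahnSeries Γ S} (hB : IsUnit B.leadingCoeff)
    {f : HahnSeries Γ R} (hf : f * B.map S.subtype = A.map S.subtype) (g : Γ) : f.coeff g ∈ S := by
  obtain ⟨v, hv⟩ := (isUnit_of_isUnit_leadingCoeff_AddUnitOrder hB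
    (AddGroup.isAddUnit _)).exists_right_inv
  have hmul (x y : HahnSeries Γ S) : (x * y).map S.subtype = x.map S.subtype * y.map S.subtype :=
    HahnSeries.map_mul (x := x) (y := y) S.subtype.toNonUnitalRingHom
  have hone : (1 : HahnSeries Γ S).map S.subtype = 1 :=
    HahnSeries.map_one S.subtype.toMonoidWithZeroHom
  have : f = (A * v).map S.subtype := calc
    f = f * (B * v).map S.subtype := by rw [hv, hone, mul_one]
    _ = (A * v).map S.subtype := by rw [hmul, hmul, ← mul_assoc, hf]
  rw [this]
  exact (A * v).coeff g |>.property

end HahnSeries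

theorem Subring.exists_eq_intCast_div_pow_of_mem_closure_inv {K : Type*} [Field K] {b : ℤ}
    (hb : (b : K) ≠ 0) {x : K} (hx : x ∈ Subring.closure {(b : K)⁻¹}) :
    ∃ (n : ℤ) (k : ℕ), x = n / (b : K) ^ k := by
  induction hx using Subring.closure_induction with
  | mem x hx =>
    rw [Set.mem_singleton_iff] at hx
    exact ⟨1, 1, by rw [hx]; push_cast; rw [pow_one, one_div]⟩
  | zero => exact ⟨0, 0, by simp⟩
  | one => exact ⟨1, 0, by simp⟩
  | add x y _ _ ihx ihy =>
    obtain ⟨n, k, rfl⟩ := ihx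
    obtain ⟨m, l, rfl⟩ := ihy
    refine ⟨n * b ^ l + m * b ^ k, k + l, ?_⟩
    rw [div_add_div _ _ (pow_ne_zero _ hb) (pow_ne_zero _ hb), pow_add]
    push_cast
    ring
  | neg x _ ihx =>
    obtain ⟨n, k, rfl⟩ := ihx
    exact ⟨-n, k, by push_cast; ring⟩
  | mul x y _ _ ihx ihy =>
    obtain ⟨n, k, rfl⟩ := ihx
    obtain ⟨m, l, rfl⟩ := ihy
    exact ⟨n * m, k + l, by push_cast [pow_add]; rw [div_mul_div_comm]⟩

theorem novikov_fraction_field_finitely_many_prime_denominators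
    (f : HahnSeries ℝ ℚ)
    (hf : ∃ A B : HahnSeries ℝ ℤ, B ≠ 0 ∧ f * iota B = iota A) :
    ∃ b : ℤ, b ≠ 0 ∧ ∀ r : ℝ, ∃ (n : ℤ) (k : ℕ), f.coeff r = (n : ℚ) / (b : ℚ) ^ k := by
  obtain ⟨A, B, hB, hAB⟩ := hf
  set b := B.leadingCoeff
  have hb : (b : ℚ) ≠ 0 := Int.cast_ne_zero.mpr (HahnSeries.leadingCoeff_ne_zero.mpr hB)
  set S := Subring.closure {(b : ℚ)⁻¹}
  let ι : ℤ →+* S := Int.castRingHom S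
  have hι : Function.Injective ι :=
    .of_comp (f := S.subtype) fun m n h => by simpa [ι] using h
  have hmap (x : HahnSeries ℝ ℤ) : (x.map ι).map S.subtype = iota x := by
    ext; simp [iota, ι]
  have hunit : IsUnit (B.map ι).leadingCoeff := by
    rw [HahnSeries.leadingCoeff_map_of_injective hι]
    exact .of_mul_eq_one ⟨(b : ℚ)⁻¹, Subring.subset_closure rfl⟩
      (Subtype.ext (by simpa [ι] using mul_inv_cancel₀ hb))
  refine ⟨b, Int.cast_ne_zero.mp hb, fun r =>
    Subring.exists_eq_intCast_div_pow_of_mem_closure_inv hb ?_⟩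
  exact HahnSeries.coeff_mem_of_mul_map_subtype_eq (A := A.map ι) hunit
    (by rw [hmap B, hmap A, hAB]) r
end
end

section
/- Let f ∈ (Λ_{ℤ,univ})[x] be a polynomial of degree at least 1 that is irreducible as a polynomial over the fraction field Q(Λ_{ℤ,univ}). Then there exists N such that for every prime p > N the reduction [f]_p ∈ (Λ_{𝔽_p,univ})[x] (obtained by applying the reduction homomorphism [·]_p to each coefficient of f) is nonzero and squarefree: in its factorization [f]_p = g₁^{m₁} ⋯ g_s^{m_s} into irreducibles over the field Λ_{𝔽_p,univ}, all multiplicities satisfy m₁ = ⋯ = m_s = 1. Equivalently, for every prime p > N, [f]_p and its formal derivative are coprime in (Λ_{𝔽_p,univ})[x]. -/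
/-!
STATEMENT 3: Let `f ∈ (Λ_{ℤ,univ})[x]` have degree at least 1 and be irreducible as a
polynomial over the fraction field `Q(Λ_{ℤ,univ})`. Then for all sufficiently large primes
`p`, the coefficientwise reduction `[f]_p ∈ (Λ_{𝔽_p,univ})[x]` is nonzero and squarefree;
equivalently, `[f]_p` and its formal derivative are coprime in `(Λ_{𝔽_p,univ})[x]`.
-/

noncomputable section

/-- Coefficientwise mod-`p` reduction `Λ_{ℤ,univ} → Λ_{𝔽_p,univ}` as a ring homomorphism. -/
def redHom (p : ℕ) : HahnSeries ℝ ℤ →+* HahnSeries ℝ (ZMod p) where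
  toFun x := x.map (Int.castRingHom (ZMod p))
  map_zero' := by ext g; simp
  map_one' := HahnSeries.map_one ((Int.castRingHom (ZMod p)).toMonoidWithZeroHom)
  map_add' x y := HahnSeries.map_add ((Int.castRingHom (ZMod p)).toAddMonoidHom)
  map_mul' x y := HahnSeries.map_mul ((Int.castRingHom (ZMod p)).toNonUnitalRingHom)

/-!
Over the fraction field `K` of `Λ = Λ_{ℤ,univ}`, which has characteristic zero, an irreducible
polynomial is separable: `u f + v f' = 1` in `K[x]`. Clearing denominators gives a Bézout
identity `a f + b f' = c` in `Λ[x]` with a constant `0 ≠ c ∈ Λ`. Some coefficient of `c` is a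
nonzero integer, which survives reduction modulo every prime `p` above its absolute value, so
`[c]_p` is a unit of the field `Λ_{𝔽_p,univ}` and `[f]_p` is coprime to its derivative.
-/

open Polynomial

instance HahnSeries.instCharZero {Γ R : Type*} [PartialOrder Γ] [AddCommMonoid Γ]
    [IsOrderedCancelAddMonoid Γ] [Semiring R] [CharZero R] : CharZero (HahnSeries Γ R) :=
  charZero_of_injective_ringHom HahnSeries.C_injective

theorem HahnSeries.exists_forall_map_intCast_ne_zero {Γ : Type*} [PartialOrder Γ]
    {x : HahnSeries Γ ℤ} (hx : x ≠ 0) :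
    ∃ N : ℕ, ∀ p : ℕ, N < p → x.map (Int.castRingHom (ZMod p)) ≠ 0 := by
  obtain ⟨g, hg⟩ : ∃ g, x.coeff g ≠ 0 := by
    by_contra! h
    exact hx (HahnSeries.ext (funext h))
  refine ⟨(x.coeff g).natAbs, fun p hp hmap => ?_⟩
  have hdvd : (p : ℤ) ∣ x.coeff g :=
    (ZMod.intCast_zmod_eq_zero_iff_dvd _ p).mp (congrArg (HahnSeries.coeff · g) hmap)
  have := Nat.le_of_dvd (Int.natAbs_pos.mpr hg) (Int.natCast_dvd.mp hdvd)
  omega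

theorem isCoprime_of_mul_add_mul_eq_isUnit {R : Type*} [CommSemiring R] {x y a b u : R}
    (hu : IsUnit u) (h : a * x + b * y = u) : IsCoprime x y := by
  obtain ⟨v, rfl⟩ := hu
  exact ⟨↑v⁻¹ * a, ↑v⁻¹ * b, by rw [mul_assoc, mul_assoc, ← mul_add, h, Units.inv_mul]⟩

namespace Polynomial

variable {R : Type*} [CommRing R]

theorem exists_mul_add_mul_eq_C_of_isCoprime_map (M : Submonoid R) (hM : M ≤ nonZeroDivisors R)
    {S : Type*} [CommRing S] [Algebra R S] [IsLocalization M S] {f g : R[X]}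
    (h : IsCoprime (f.map (algebraMap R S)) (g.map (algebraMap R S))) :
    ∃ a b : R[X], ∃ c ∈ M, a * f + b * g = C c := by
  obtain ⟨u, v, huv⟩ := h
  obtain ⟨du, hdu, hu⟩ := IsLocalization.integerNormalization_spec M u
  obtain ⟨dv, hdv, hv⟩ := IsLocalization.integerNormalization_spec M v
  refine ⟨C dv * IsLocalization.integerNormalization M u,
    C du * IsLocalization.integerNormalization M v, du * dv, M.mul_mem hdu hdv, ?_⟩
  apply map_injective _ (IsLocalization.injective S hM)
  simp only [Polynomial.map_add, Polynomial.map_mul, map_C, hu, hv, Algebra.smul_def,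
    algebraMap_apply, map_mul]
  linear_combination C (algebraMap R S du) * C (algebraMap R S dv) * huv

theorem isCoprime_map_of_mul_add_mul_eq_C {S : Type*} [CommRing S] {f g a b : R[X]} {c : R}
    (h : a * f + b * g = C c) (ψ : R →+* S) (hc : IsUnit (ψ c)) :
    IsCoprime (f.map ψ) (g.map ψ) :=
  isCoprime_of_mul_add_mul_eq_isUnit (hc.map C) (by simpa using congrArg (map ψ) h)

end Polynomial

theorem reduction_of_irreducible_is_squarefree_for_large_primes_general
    (f : Polynomial (HahnSeries ℝ ℤ))
    (hirr : Irreducible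
      (f.map (algebraMap (HahnSeries ℝ ℤ) (FractionRing (HahnSeries ℝ ℤ))))) :
    ∃ N : ℕ, ∀ p : ℕ, p.Prime → N < p →
      f.map (redHom p) ≠ 0 ∧
      Squarefree (f.map (redHom p)) ∧
      IsCoprime (f.map (redHom p)) (Polynomial.derivative (f.map (redHom p))) := by
  have : CharZero (FractionRing (HahnSeries ℝ ℤ)) :=
    charZero_of_injective_algebraMap (IsFractionRing.injective (HahnSeries ℝ ℤ) _)
  have hsep := hirr.separable
  rw [Separable, derivative_map] at hsep
  obtain ⟨a, b, c, hc, hbezout⟩ :=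
    exists_mul_add_mul_eq_C_of_isCoprime_map _ le_rfl hsep
  obtain ⟨N, hN⟩ :=
    HahnSeries.exists_forall_map_intCast_ne_zero (nonZeroDivisors.ne_zero hc)
  refine ⟨N, fun p hp hNp => ?_⟩
  have : Fact p.Prime := ⟨hp⟩
  have hsep_p : (f.map (redHom p)).Separable := by
    rw [Separable, derivative_map]
    exact isCoprime_map_of_mul_add_mul_eq_C hbezout _ (isUnit_iff_ne_zero.mpr (hN p hNp))
  exact ⟨hsep_p.ne_zero, hsep_p.squarefree, hsep_p⟩

theorem reduction_of_irreducible_is_squarefree_for_large_primes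
    (f : Polynomial (HahnSeries ℝ ℤ)) (hdeg : 1 ≤ f.natDegree)
    (hirr : Irreducible
      (f.map (algebraMap (HahnSeries ℝ ℤ) (FractionRing (HahnSeries ℝ ℤ))))) :
    ∃ N : ℕ, ∀ p : ℕ, p.Prime → N < p →
      f.map (redHom p) ≠ 0 ∧
      Squarefree (f.map (redHom p)) ∧
      IsCoprime (f.map (redHom p)) (Polynomial.derivative (f.map (redHom p))) :=
  reduction_of_irreducible_is_squarefree_for_large_primes_general f hirr
end
end

section
/- Let K be a field complete with respect to a nonarchimedean (ultrametric) norm |·|, let L be an algebraic field extension of K, and let γ ∈ L have monic minimal polynomial g over K of degree M ≥ 1. Then the unique power-multiplicative norm ‖·‖ on L extending |·| (the spectral norm) satisfies ‖γ‖ = |g(0)|^{1/M}; consequently ‖γ‖ ≤ max{1, |g(0)|}. -/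
/-!
STATEMENT 6: Let `K` be a field complete with respect to a nonarchimedean norm, `L` an
algebraic field extension of `K`, and `γ ∈ L` with monic minimal polynomial `g` over `K`
of degree `M ≥ 1`. Then the unique multiplicative (in particular power-multiplicative)
nonarchimedean norm `f` on `L` extending the norm of `K` satisfies
`f γ = |g(0)|^{1/M}`; consequently `f γ ≤ max {1, |g(0)|}`.
-/

/-- Auxiliary: if `a ^ n ≤ C * b ^ n` for all `n`, with `b > 0`, then `a ≤ b`. -/
private lemma aux_pow_le {a b C : ℝ} (ha : 0 ≤ a) (hb : 0 < b)
    (h : ∀ n : ℕ, a ^ n ≤ C * b ^ n) : a ≤ b := by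
  by_contra hab
  push_neg at hab
  have h1 : 1 < a / b := (one_lt_div hb).2 hab
  obtain ⟨n, hn⟩ := pow_unbounded_of_one_lt C h1
  have h2 := h n
  rw [div_pow] at hn
  have hbn : 0 < b ^ n := pow_pos hb n
  rw [lt_div_iff₀ hbn] at hn
  linarith

set_option maxHeartbeats 2000000 in
set_option synthInstance.maxHeartbeats 400000 in
open IntermediateField in
theorem norm_of_algebraic_element_via_minimal_polynomial
    {K L : Type*} [NormedField K] [CompleteSpace K] [IsUltrametricDist K]
    [Field L] [Algebra K L] [Algebra.IsAlgebraic K L]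
    (γ : L) (g : Polynomial K) (hg : g = minpoly K γ) (hmonic : g.Monic)
    (M : ℕ) (hM : g.natDegree = M) (hM1 : 1 ≤ M)
    (f : L → ℝ)
    (hnonneg : ∀ x, 0 ≤ f x)
    (hzero : ∀ x, f x = 0 ↔ x = 0)
    (hmul : ∀ x y, f (x * y) = f x * f y)
    (hna : ∀ x y, f (x + y) ≤ max (f x) (f y))
    (hext : ∀ c : K, f (algebraMap K L c) = ‖c‖) :
    f γ = ‖g.coeff 0‖ ^ ((1 : ℝ) / M) ∧ f γ ≤ max 1 ‖g.coeff 0‖ := by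
  classical
  -- basic properties of f
  have hf0 : f 0 = 0 := (hzero 0).2 rfl
  have hf1 : f 1 = 1 := by
    have h := hmul 1 1
    rw [one_mul] at h
    have h1 : f 1 ≠ 0 := fun h0 => one_ne_zero ((hzero 1).1 h0)
    have h2 : f 1 * 1 = f 1 * f 1 := by rw [mul_one]; exact h
    exact (mul_left_cancel₀ h1 h2).symm
  have hfneg1 : f (-1) = 1 := by
    have h2 : f (-1) * f (-1) = 1 := by rw [← hmul]; norm_num [hf1]
    have h3 : (f (-1) - 1) * (f (-1) + 1) = 0 := by linear_combination h2
    rcases mul_eq_zero.1 h3 with h | h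
    · linarith
    · have := hnonneg (-1); linarith
  have hfneg : ∀ x, f (-x) = f x := fun x => by
    rw [show -x = (-1) * x by ring, hmul, hfneg1, one_mul]
  have hfpow : ∀ (x : L) (n : ℕ), f (x ^ n) = f x ^ n := by
    intro x n
    induction n with
    | zero => simpa using hf1
    | succ n ih => rw [pow_succ, pow_succ, hmul, ih]
  have hfinv : ∀ x : L, x ≠ 0 → f x⁻¹ = (f x)⁻¹ := by
    intro x hx
    have h := hmul x x⁻¹
    rw [mul_inv_cancel₀ hx, hf1] at h
    exact (inv_eq_of_mul_eq_one_right h.symm).symm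
  have hint : IsIntegral K γ := (Algebra.IsAlgebraic.isAlgebraic (R := K) γ).isIntegral
  have hM0 : (M : ℝ) ≠ 0 := Nat.cast_ne_zero.2 (by omega)
  have hexp : (0:ℝ) < 1 / M := by positivity
  -- key reduction
  suffices key : f γ ^ M = ‖g.coeff 0‖ by
    have h1 : f γ = ‖g.coeff 0‖ ^ ((1 : ℝ) / M) := by
      have hmm : ((M:ℝ) * ((1:ℝ)/M)) = 1 := by field_simp
      rw [← key, ← Real.rpow_natCast (f γ) M, ← Real.rpow_mul (hnonneg γ), hmm, Real.rpow_one]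
    refine ⟨h1, ?_⟩
    rw [h1]
    rcases le_or_gt ‖g.coeff 0‖ 1 with h | h
    · exact le_trans (Real.rpow_le_one (norm_nonneg _) h hexp.le) (le_max_left _ _)
    · have h2 : ‖g.coeff 0‖ ^ ((1:ℝ)/M) ≤ ‖g.coeff 0‖ ^ (1:ℝ) := by
        apply Real.rpow_le_rpow_of_exponent_le h.le
        rw [div_le_one (by positivity)]
        exact_mod_cast hM1
      rw [Real.rpow_one] at h2
      exact le_trans h2 (le_max_right _ _)
  -- case γ = 0
  by_cases hγ : γ = 0
  · subst hγ
    have hc0 : g.coeff 0 = 0 := by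
      have h := minpoly.aeval K (0 : L)
      rw [← hg] at h
      rw [Polynomial.aeval_def, Polynomial.eval₂_at_zero] at h
      exact (algebraMap K L).injective (h.trans (map_zero _).symm)
    rw [hc0, hf0, norm_zero]
    exact zero_pow (by omega)
  -- case γ ≠ 0
  have hfγ0 : f γ ≠ 0 := fun h => hγ ((hzero γ).1 h)
  have hfγpos : 0 < f γ := (hnonneg γ).lt_of_ne' hfγ0
  by_cases hnt : ∃ c : K, 1 < ‖c‖
  · -- the norm on K is nontrivial
    letI : NontriviallyNormedField K := { (inferInstance : NormedField K) with non_trivial := hnt }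
    haveI fd : FiniteDimensional K K⟮γ⟯ := IntermediateField.adjoin.finiteDimensional hint
    letI : NormedAddCommGroup K⟮γ⟯ := AddGroupNorm.toNormedAddCommGroup
      { toFun := fun x => f ↑x
        map_zero' := by simpa using hf0
        add_le' := fun x y => by
          push_cast
          exact le_trans (hna _ _) (max_le_add_of_nonneg (hnonneg _) (hnonneg _))
        neg' := fun x => by push_cast; exact hfneg ↑x
        eq_zero_of_map_eq_zero' := fun x h => by
          have : (x : L) = 0 := (hzero ↑x).1 h
          exact_mod_cast this }
    have hnorm : ∀ x : K⟮γ⟯, ‖x‖ = f ↑x := fun x => rfl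
    have hsmul : ∀ (c : K) (x : K⟮γ⟯), ((c • x : K⟮γ⟯) : L) = algebraMap K L c * (x : L) := by
      intro c x
      have h1 : ((c • x : K⟮γ⟯) : L) = c • (x : L) := rfl
      rw [h1, Algebra.smul_def]
    letI : NormedSpace K K⟮γ⟯ :=
      { norm_smul_le := fun c x => by
          rw [hnorm, hnorm, hsmul, hmul, hext] }
    set pb := IntermediateField.adjoin.powerBasis hint with hpb
    have hdim : pb.dim = M := by
      rw [IntermediateField.adjoin.powerBasis_dim, ← hg, hM]
    set b := pb.basis with hb
    -- bound on entries of left multiplication matrices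
    have hentry : ∀ i j : Fin pb.dim, ∃ C : ℝ, 0 < C ∧
        ∀ x : K⟮γ⟯, ‖Algebra.leftMulMatrix b x i j‖ ≤ C * f ↑x := by
      intro i j
      set φ : K⟮γ⟯ →ₗ[K] K :=
        (Matrix.entryLinearMap K K i j).comp (Algebra.leftMulMatrix b).toLinearMap with hφ
      set ψ := LinearMap.toContinuousLinearMap φ with hψ
      refine ⟨‖ψ‖ + 1, by positivity, fun x => ?_⟩
      have h1 : ‖ψ x‖ ≤ ‖ψ‖ * ‖x‖ := ψ.le_opNorm x
      have h2 : ψ x = Algebra.leftMulMatrix b x i j := rfl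
      rw [h2] at h1
      rw [← hnorm]
      nlinarith [norm_nonneg ψ, norm_nonneg x, hnorm x ▸ hnonneg (x : L)]
    -- global bound on algebra norms
    have hdetbound : ∃ D : ℝ, 0 < D ∧
        ∀ x : K⟮γ⟯, ‖Algebra.norm K x‖ ≤ D ^ pb.dim * f ↑x ^ pb.dim := by
      choose C hCpos hC using fun p : Fin pb.dim × Fin pb.dim => hentry p.1 p.2
      refine ⟨(∑ p, C p) + 1, ?_, fun x => ?_⟩
      · have : (0:ℝ) ≤ ∑ p, C p := Finset.sum_nonneg fun p _ => (hCpos p).le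
        linarith
      have hCD : ∀ p : Fin pb.dim × Fin pb.dim, C p ≤ (∑ q, C q) + 1 := by
        intro p
        have h1 : C p ≤ ∑ q, C q :=
          Finset.single_le_sum (fun q _ => (hCpos q).le) (Finset.mem_univ p)
        linarith
      have hS : (0:ℝ) ≤ (∑ p, C p) + 1 := by
        have := Finset.sum_nonneg fun p (_ : p ∈ Finset.univ) => (hCpos p).le
        linarith
      rw [Algebra.norm_eq_matrix_det b, Matrix.det_apply]
      apply IsUltrametricDist.norm_sum_le_of_forall_le_of_nonneg
        (mul_nonneg (pow_nonneg hS _) (pow_nonneg (hnonneg _) _))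
      intro σ _
      have hsign : ‖Equiv.Perm.sign σ • ∏ i, Algebra.leftMulMatrix b x (σ i) i‖
          = ‖∏ i, Algebra.leftMulMatrix b x (σ i) i‖ := by
        rcases Int.units_eq_one_or (Equiv.Perm.sign σ) with h | h <;>
          simp [h, Units.smul_def]
      rw [hsign, norm_prod]
      have h3 : ∀ i : Fin pb.dim, ‖Algebra.leftMulMatrix b x (σ i) i‖
          ≤ ((∑ q, C q) + 1) * f ↑x := by
        intro i
        refine le_trans (hC (σ i, i) x) ?_
        exact mul_le_mul_of_nonneg_right (hCD (σ i, i)) (hnonneg _)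
      calc ∏ i, ‖Algebra.leftMulMatrix b x (σ i) i‖
          ≤ ∏ _i : Fin pb.dim, (((∑ q, C q) + 1) * f ↑x) :=
            Finset.prod_le_prod (fun i _ => norm_nonneg _) (fun i _ => h3 i)
        _ = (((∑ q, C q) + 1) * f ↑x) ^ pb.dim := by
            rw [Finset.prod_const, Finset.card_univ, Fintype.card_fin]
        _ = ((∑ q, C q) + 1) ^ pb.dim * f ↑x ^ pb.dim := mul_pow _ _ _
    obtain ⟨D, hD, hbd⟩ := hdetbound
    set γ' : K⟮γ⟯ := IntermediateField.AdjoinSimple.gen K γ with hγ'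
    have hγ'c : (γ' : L) = γ := rfl
    have hγ'0 : γ' ≠ 0 := by
      intro h
      apply hγ
      rw [← hγ'c, h]
      rfl
    have hN : Algebra.norm K γ' = (-1) ^ M * g.coeff 0 := by
      have h := Algebra.PowerBasis.norm_gen_eq_coeff_zero_minpoly pb
      have hgen : pb.gen = γ' := rfl
      rw [hgen, hdim] at h
      rw [h, IntermediateField.minpoly_gen, ← hg]
    have hNnorm : ‖Algebra.norm K γ'‖ = ‖g.coeff 0‖ := by
      rw [hN, norm_mul, norm_pow, norm_neg, norm_one, one_pow, one_mul]
    have hNne : Algebra.norm K γ' ≠ 0 := by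
      rw [Algebra.norm_ne_zero_iff]
      exact hγ'0
    have hNpos : 0 < ‖Algebra.norm K γ'‖ := norm_pos_iff.2 hNne
    -- forward inequality : ‖N γ'‖ ≤ (f γ) ^ M
    have hforward : ‖Algebra.norm K γ'‖ ≤ f γ ^ M := by
      apply aux_pow_le (norm_nonneg _) (by positivity) (C := D ^ pb.dim)
      intro n
      have h1 := hbd (γ' ^ n)
      rw [map_pow, norm_pow] at h1
      have h2 : ((γ' ^ n : K⟮γ⟯) : L) = γ ^ n := by push_cast [hγ'c]; ring
      rw [h2, hfpow, hdim, ← pow_mul, mul_comm n M, pow_mul] at h1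
      rw [hdim]
      exact h1
    -- backward inequality : (f γ) ^ M ≤ ‖N γ'‖
    have hbackward : f γ ^ M ≤ ‖Algebra.norm K γ'‖ := by
      apply aux_pow_le (by positivity) hNpos (C := D ^ pb.dim)
      intro n
      have hinv1 : Algebra.norm K γ'⁻¹ = (Algebra.norm K γ')⁻¹ := by
        have h : Algebra.norm K γ'⁻¹ * Algebra.norm K γ' = 1 := by
          rw [← map_mul, inv_mul_cancel₀ hγ'0, map_one]
        exact eq_inv_of_mul_eq_one_left h
      have h1 := hbd (γ'⁻¹ ^ n)
      have h2 : ((γ'⁻¹ ^ n : K⟮γ⟯) : L) = (γ' : L)⁻¹ ^ n := by norm_cast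
      rw [map_pow, hinv1, norm_pow, norm_inv, h2, hγ'c, hfpow, hfinv γ hγ] at h1
      have h3 : ((f γ)⁻¹ ^ n) ^ pb.dim = ((f γ ^ M) ^ n)⁻¹ := by
        rw [hdim, inv_pow, inv_pow, ← pow_mul, ← pow_mul, mul_comm n M]
      rw [h3, inv_pow] at h1
      have hu : 0 < ‖Algebra.norm K γ'‖ ^ n := pow_pos hNpos n
      have hv : 0 < (f γ ^ M) ^ n := by positivity
      rw [inv_eq_one_div, inv_eq_one_div, mul_one_div, div_le_div_iff₀ hu hv] at h1
      rw [one_mul] at h1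
      exact h1
    exact le_antisymm (by rw [← hNnorm]; exact hbackward) (by rw [← hNnorm]; exact hforward)
  · -- the norm on K is trivial
    push_neg at hnt
    have hunit : ∀ c : K, c ≠ 0 → ‖c‖ = 1 := by
      intro c hc
      have hcp : 0 < ‖c‖ := norm_pos_iff.2 hc
      refine le_antisymm (hnt c) ?_
      have h1 := hnt c⁻¹
      rw [norm_inv] at h1
      have h2 := mul_le_mul_of_nonneg_left h1 hcp.le
      rw [mul_inv_cancel₀ hcp.ne', mul_one] at h2
      exact h2
    -- every element of L has f-value at most 1
    have hfsum : ∀ (n : ℕ) (z : ℕ → L) (B : ℝ), 0 ≤ B →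
        (∀ i < n, f (z i) ≤ B) → f (∑ i ∈ Finset.range n, z i) ≤ B := by
      intro n z B hB
      induction n with
      | zero => intro _; simpa [hf0] using hB
      | succ n ih =>
        intro h
        rw [Finset.sum_range_succ]
        exact le_trans (hna _ _)
          (max_le (ih fun i hi => h i (by omega)) (h n (by omega)))
    have hle1 : ∀ x : L, f x ≤ 1 := by
      intro x
      by_cases hx0 : x = 0
      · rw [hx0, hf0]; norm_num
      by_contra hx
      push_neg at hx
      have hxint : IsIntegral K x := (Algebra.IsAlgebraic.isAlgebraic (R := K) x).isIntegral
      set p := minpoly K x with hp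
      set n := p.natDegree with hn
      have hn1 : 1 ≤ n := minpoly.natDegree_pos hxint
      have haev : (Polynomial.aeval x) p = 0 := minpoly.aeval K x
      rw [Polynomial.aeval_eq_sum_range, Finset.sum_range_succ] at haev
      have hlead : p.coeff n = 1 := (minpoly.monic hxint).coeff_natDegree
      rw [hlead, one_smul] at haev
      have hxn : x ^ n = -∑ i ∈ Finset.range n, p.coeff i • x ^ i := by
        rw [eq_neg_iff_add_eq_zero]
        linear_combination haev
      have hbound : f (x ^ n) ≤ f x ^ (n - 1) := by
        rw [hxn, hfneg]
        apply hfsum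
        · positivity
        intro i hi
        rw [Algebra.smul_def, hmul, hext, hfpow]
        rcases eq_or_ne (p.coeff i) 0 with h | h
        · rw [h, norm_zero, zero_mul]; positivity
        · rw [hunit _ h, one_mul]
          exact pow_le_pow_right₀ hx.le (by omega)
      rw [hfpow] at hbound
      have : f x ^ (n-1) < f x ^ n := pow_lt_pow_right₀ hx (by omega)
      linarith
    have ht1 : f γ = 1 := by
      have h1 := hle1 γ
      have h2 := hle1 γ⁻¹
      rw [hfinv γ hγ] at h2
      have h3 := mul_le_mul_of_nonneg_left h2 hfγpos.le
      rw [mul_inv_cancel₀ hfγ0, mul_one] at h3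
      linarith
    have hc0 : g.coeff 0 ≠ 0 := by
      rw [hg]
      exact minpoly.coeff_zero_ne_zero hint hγ
    rw [ht1, hunit _ hc0, one_pow]
end

section
/- For any field K, the universal Novikov field Λ_{K,univ} = HahnSeries ℝ K is complete with respect to the nonarchimedean metric d(x, y) = exp(−ν(x − y)) for x ≠ y and d(x, x) = 0, where ν is the order valuation; that is, every Cauchy sequence for this metric converges in HahnSeries ℝ K. -/
/-!
Two distinct Hahn series agree on `(-∞, c]` exactly when their difference has order `> c`, so
`d x y < exp (-c)` says that `x` and `y` agree on `(-∞, c]`. A Cauchy sequence therefore has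
coefficients that stabilize on every `(-∞, c]`, and the limit is the series of eventual
coefficients. Its support is well-founded because below any cutoff it coincides with the support
of a single term of the sequence.
-/

namespace HahnSeries

variable {Γ R : Type*}

theorem lt_order_sub_iff [Zero Γ] [LinearOrder Γ] [AddGroup R] {x y : HahnSeries Γ R}
    (hxy : x ≠ y) {c : Γ} : c < (x - y).order ↔ ∀ r ≤ c, x.coeff r = y.coeff r := by
  constructor
  · intro hc r hr
    have hzero := coeff_eq_zero_of_lt_order (hr.trans_lt hc)
    rwa [coeff_sub, sub_eq_zero] at hzero
  · intro h
    by_contra! hle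
    exact coeff_order_eq_zero.not.mpr (sub_ne_zero.mpr hxy) (by rw [coeff_sub, h _ hle, sub_self])

theorem isPWO_support_of_forall_exists_coeff_eq [LinearOrder Γ] [Zero R] {f : Γ → R}
    (hf : ∀ c, ∃ x : HahnSeries Γ R, ∀ r ≤ c, f r = x.coeff r) :
    (Function.support f).IsPWO := by
  refine Set.IsWF.isPWO (Set.isWF_iff_no_descending_seq.mpr fun g hg hgf => ?_)
  obtain ⟨x, hx⟩ := hf (g 0)
  refine Set.isWF_iff_no_descending_seq.mp x.isWF_support g hg fun n => ?_
  rw [mem_support, ← hx _ (hg.antitone n.zero_le)]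
  exact hgf n

theorem exists_eventually_coeff_eq_of_coeff_cauchy [LinearOrder Γ] [Zero R]
    {u : ℕ → HahnSeries Γ R}
    (hu : ∀ c, ∃ N, ∀ m ≥ N, ∀ n ≥ N, ∀ r ≤ c, (u m).coeff r = (u n).coeff r) :
    ∃ L : HahnSeries Γ R, ∀ c, ∃ N, ∀ n ≥ N, ∀ r ≤ c, (u n).coeff r = L.coeff r := by
  choose N hN using hu
  have agree : ∀ c, ∀ r ≤ c, (u (N r)).coeff r = (u (N c)).coeff r := fun c r hr =>
    (hN r _ le_rfl _ (le_max_left _ (N c)) r le_rfl).trans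
      (hN c _ (le_max_right _ _) _ le_rfl r hr)
  refine ⟨⟨fun r => (u (N r)).coeff r,
    isPWO_support_of_forall_exists_coeff_eq fun c => ⟨u (N c), agree c⟩⟩, fun c => ?_⟩
  exact ⟨N c, fun n hn r hr => (hN c n hn _ le_rfl r hr).trans (agree c r hr).symm⟩

end HahnSeries

theorem novikov_field_complete
    {K : Type*} [Field K]
    (d : HahnSeries ℝ K → HahnSeries ℝ K → ℝ)
    (hd_self : ∀ x, d x x = 0)
    (hd : ∀ x y, x ≠ y → d x y = Real.exp (-(x - y).order))
    (u : ℕ → HahnSeries ℝ K)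
    (hu : ∀ ε : ℝ, 0 < ε → ∃ N : ℕ, ∀ m ≥ N, ∀ n ≥ N, d (u m) (u n) < ε) :
    ∃ L : HahnSeries ℝ K, ∀ ε : ℝ, 0 < ε → ∃ N : ℕ, ∀ n ≥ N, d (u n) L < ε := by
  have dist_lt_iff :
      ∀ c x y, d x y < Real.exp (-c) ↔ ∀ r ≤ c, x.coeff r = y.coeff r := by
    intro c x y
    by_cases hxy : x = y
    · simp only [hxy, hd_self, Real.exp_pos, forall_const, implies_true]
    · rw [hd x y hxy, Real.exp_lt_exp, neg_lt_neg_iff, HahnSeries.lt_order_sub_iff hxy]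
  obtain ⟨L, hL⟩ := HahnSeries.exists_eventually_coeff_eq_of_coeff_cauchy fun c =>
    (hu _ (Real.exp_pos (-c))).imp fun N hN m hm n hn => (dist_lt_iff c _ _).mp (hN m hm n hn)
  refine ⟨L, fun ε hε => (hL (-Real.log ε)).imp fun N hN n hn => ?_⟩
  rw [← Real.exp_log hε, ← neg_neg (Real.log ε), dist_lt_iff]
  exact hN n hn
end

section
/- Let N ∈ ℕ and let Q be an N × N matrix with entries in Q(Λ_{ℤ,univ}), viewed inside Λ_{ℚ,univ} = HahnSeries ℝ ℚ, such that det Q ≠ 0. Then for all sufficiently large primes p: every coefficient of every entry of Q is p-integral, so the entrywise coefficientwise mod-p reduction [Q]_p is a well-defined N × N matrix over Λ_{𝔽_p,univ} = HahnSeries ℝ (ZMod p), and det([Q]_p) ≠ 0, i.e., [Q]_p is invertible over the field Λ_{𝔽_p,univ}. -/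
/-! Write each entry of `Q` as `A / B` with `A, B` integral Hahn series. Once `p` does not divide
the leading coefficient of `B`, that coefficient is a unit in `ℤ_(p)`, hence so is `B` in the Hahn
series over `ℤ_(p)`, and `Q` lifts to a matrix `Q'` over `ℤ_(p)`. Reduction mod `p` is then a ring
homomorphism, so it commutes with the determinant; and a fixed nonzero coefficient of `det Q`
survives reduction as soon as `p` does not divide its numerator. -/

noncomputable section

/-- Reduction of a (`p`-integral) rational number modulo `p`, sending `q` to
`q.num * (q.den)⁻¹` in `ZMod p`. -/
def ratRed (p : ℕ) : ZeroHom ℚ (ZMod p) where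
  toFun q := (q.num : ZMod p) * (q.den : ZMod p)⁻¹
  map_zero' := by simp

/-- Coefficientwise mod-`p` reduction `Λ_{ℚ,univ} → Λ_{𝔽_p,univ}` (meaningful on series
all of whose coefficients are `p`-integral). -/
def redQ (p : ℕ) (x : HahnSeries ℝ ℚ) : HahnSeries ℝ (ZMod p) := x.map (ratRed p)

open Filter HahnSeries

namespace HahnSeries

variable {Γ R S : Type*}

section Semiring

variable [AddCommMonoid Γ] [PartialOrder Γ] [IsOrderedCancelAddMonoid Γ] [Semiring R] [Semiring S]

def mapRingHom (f : R →+* S) : HahnSeries Γ R →+* HahnSeries Γ S where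
  toFun x := x.map f
  map_one' := HahnSeries.map_one f.toMonoidWithZeroHom
  map_mul' _ _ := HahnSeries.map_mul (f : R →ₙ+* S)
  map_zero' := HahnSeries.map_zero (f : ZeroHom R S)
  map_add' _ _ := HahnSeries.map_add (f : R →+ S)

@[simp]
lemma coeff_mapRingHom (f : R →+* S) (x : HahnSeries Γ R) (g : Γ) :
    (mapRingHom f x).coeff g = f (x.coeff g) := HahnSeries.map_coeff ..

end Semiring

section LinearOrder

variable [LinearOrder Γ] [Zero R] [Zero S] {F : Type*} [FunLike F R S] [ZeroHomClass F R S]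

lemma orderTop_map {f : F} (hf : Function.Injective f) (x : HahnSeries Γ R) :
    (x.map f).orderTop = x.orderTop := by
  have hcoeff (g : Γ) : (x.map f).coeff g ≠ 0 ↔ x.coeff g ≠ 0 := map_ne_zero_iff f hf
  rcases eq_or_ne x 0 with rfl | hx
  · simp [show (0 : HahnSeries Γ R).map f = 0 by ext; simp]
  obtain ⟨g, hg⟩ := WithTop.ne_top_iff_exists.1 (orderTop_ne_top.2 hx)
  rw [← hg]
  refine orderTop_eq_of_le ((hcoeff g).2 (coeff_orderTop_ne hg.symm)) fun g' hg' => ?_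
  exact WithTop.coe_le_coe.1 (hg ▸ orderTop_le_of_coeff_ne_zero ((hcoeff g').1 hg'))

lemma leadingCoeff_map {f : F} (hf : Function.Injective f) (x : HahnSeries Γ R) :
    (x.map f).leadingCoeff = f x.leadingCoeff := by
  unfold leadingCoeff
  rw [orderTop_map hf]
  cases x.orderTop <;> simp

end LinearOrder

end HahnSeries

section RatCast

variable (α : Type*) [DivisionRing α]

/-- For `α = ZMod p` these are the `p`-integral rationals, and `ratCastSubringHom` below is
reduction mod `p`. -/
def ratCastSubring : Subring ℚ where
  carrier := {q | (q.den : α) ≠ 0}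
  zero_mem' := by simp
  one_mem' := by simp
  add_mem' {a b} ha hb := ne_zero_of_dvd_ne_zero (by push_cast; exact mul_ne_zero ha hb)
    (Nat.cast_dvd_cast (Rat.add_den_dvd a b))
  mul_mem' {a b} ha hb := ne_zero_of_dvd_ne_zero (by push_cast; exact mul_ne_zero ha hb)
    (Nat.cast_dvd_cast (Rat.mul_den_dvd a b))
  neg_mem' := by simp

lemma mem_ratCastSubring {q : ℚ} : q ∈ ratCastSubring α ↔ (q.den : α) ≠ 0 := Iff.rfl

def ratCastSubringHom : ratCastSubring α →+* α where
  toFun q := ((q : ℚ) : α)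
  map_one' := by simp
  map_zero' := by simp
  map_add' a b := Rat.cast_add_of_ne_zero a.2 b.2
  map_mul' a b := Rat.cast_mul_of_ne_zero a.2 b.2

variable {α}

lemma ratCastSubringHom_ne_zero {q : ratCastSubring α} (hq : ((q : ℚ).num : α) ≠ 0) :
    ratCastSubringHom α q ≠ 0 := by
  show ((q : ℚ) : α) ≠ 0
  rw [Rat.cast_def]
  exact div_ne_zero hq q.2

lemma isUnit_intCast_ratCastSubring {b : ℤ} (hb : (b : α) ≠ 0) :
    IsUnit (b : ratCastSubring α) := by
  have hb0 : (b : ℚ) ≠ 0 := Int.cast_ne_zero.2 (by rintro rfl; simp at hb)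
  have hinv : (b : ℚ)⁻¹ ∈ ratCastSubring α := by
    rw [mem_ratCastSubring, Rat.inv_intCast_den, if_neg (by exact_mod_cast hb0)]
    rcases Int.natAbs_eq b with h | h <;> rw [h] at hb <;> simpa using hb
  exact .of_mul_eq_one ⟨_, hinv⟩ (Subtype.ext (mul_inv_cancel₀ hb0))

end RatCast

lemma exists_mapRingHom_subtype_eq_of_mul_iota_eq {α : Type*} [DivisionRing α]
    {x : HahnSeries ℝ ℚ} {A B : HahnSeries ℝ ℤ} (hB : (B.leadingCoeff : α) ≠ 0)
    (h : x * iota B = iota A) :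
    ∃ y : HahnSeries ℝ (ratCastSubring α), mapRingHom (ratCastSubring α).subtype y = x := by
  set j := mapRingHom (Γ := ℝ) (Int.castRingHom (ratCastSubring α))
  have hj (C : HahnSeries ℝ ℤ) : mapRingHom (ratCastSubring α).subtype (j C) = iota C := by
    ext; simp [j, iota]
  have hunit : IsUnit (j B) := by
    rw [HahnSeries.isUnit_iff, show (j B).leadingCoeff = B.leadingCoeff from
      leadingCoeff_map (f := Int.castRingHom _) Int.cast_injective B]
    exact isUnit_intCast_ratCastSubring hB
  refine ⟨j A * ↑hunit.unit⁻¹, ?_⟩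
  rw [map_mul, hj, ← h, mul_assoc, ← hj, ← map_mul, hunit.mul_val_inv, map_one, mul_one]

lemma ratRed_eq_ratCast {p : ℕ} [Fact p.Prime] (q : ℚ) : ratRed p q = q := by
  rw [Rat.cast_def, div_eq_mul_inv]
  rfl

lemma redQ_mapRingHom_subtype {p : ℕ} [Fact p.Prime]
    (y : HahnSeries ℝ (ratCastSubring (ZMod p))) :
    redQ p (mapRingHom (ratCastSubring (ZMod p)).subtype y) =
      mapRingHom (ratCastSubringHom (ZMod p)) y := by
  ext
  exact ratRed_eq_ratCast _

lemma eventually_intCast_zmod_ne_zero {c : ℤ} (hc : c ≠ 0) :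
    ∀ᶠ p in atTop, (c : ZMod p) ≠ 0 := by
  refine eventually_atTop.2 ⟨c.natAbs + 1, fun p hp hdvd => hc ?_⟩
  rw [ZMod.intCast_zmod_eq_zero_iff_dvd] at hdvd
  exact Int.eq_zero_of_dvd_of_natAbs_lt_natAbs hdvd (by simp; omega)

theorem reduction_of_invertible_matrix_is_invertible
    (n : ℕ) (Q : Matrix (Fin n) (Fin n) (HahnSeries ℝ ℚ))
    (hfrac : ∀ i j, ∃ A B : HahnSeries ℝ ℤ, B ≠ 0 ∧ Q i j * iota B = iota A)
    (hdet : Q.det ≠ 0) :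
    ∃ N : ℕ, ∀ p : ℕ, p.Prime → N < p →
      (∀ i j, ∀ r : ℝ, ¬ (p : ℕ) ∣ ((Q i j).coeff r).den) ∧
      Matrix.det (fun i j => redQ p (Q i j)) ≠ 0 := by
  choose A B hB hQB using hfrac
  obtain ⟨r₀, hr₀⟩ : ∃ r, Q.det.coeff r ≠ 0 := by
    by_contra! h
    exact hdet (HahnSeries.ext (funext h))
  obtain ⟨N, hN⟩ := eventually_atTop.1 <|
    (eventually_intCast_zmod_ne_zero (Rat.num_ne_zero.2 hr₀)).and <|
      eventually_all.2 fun i => eventually_all.2 fun j =>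
        eventually_intCast_zmod_ne_zero (leadingCoeff_ne_zero.2 (hB i j))
  refine ⟨N, fun p hp hNp => ?_⟩
  have : Fact p.Prime := ⟨hp⟩
  obtain ⟨hnum, hlead⟩ := hN p hNp.le
  choose Q' hQ' using fun i j =>
    exists_mapRingHom_subtype_eq_of_mul_iota_eq (hlead i j) (hQB i j)
  have hQ : Q = (mapRingHom (ratCastSubring (ZMod p)).subtype).mapMatrix (Matrix.of Q') := by
    ext1 i j
    exact (hQ' i j).symm
  refine ⟨fun i j r => ?_, ?_⟩
  · rw [← hQ' i j, coeff_mapRingHom, ← ZMod.natCast_eq_zero_iff]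
    exact ((Q' i j).coeff r).2
  · have hred : (fun i j => redQ p (Q i j)) =
        (mapRingHom (ratCastSubringHom (ZMod p))).mapMatrix (Matrix.of Q') := by
      funext i j
      rw [← hQ' i j, redQ_mapRingHom_subtype]
      rfl
    rw [hred, ← RingHom.map_det]
    refine ne_zero_of_coeff_ne_zero (g := r₀) ?_
    rw [hQ, ← RingHom.map_det, coeff_mapRingHom] at hnum
    exact ratCastSubringHom_ne_zero hnum
end
end
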